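/- There is a constant c > 0 such that for every f ∈ C_0^∞(ℝ²), ∬_{ℝ²} f⁶ dx dy ≤ c (∬_{ℝ²} f² dx dy) · (∬_{ℝ²} ((∂_x f)² + (∂_y f)²) dx dy)². -/

import Mathlib

open MeasureTheory Set

/-- `∂_x f` as a function on `ℝ²`. -/
noncomputable def px (f : ℝ × ℝ → ℝ) : ℝ × ℝ → ℝ :=
  fun p => deriv (fun t => f (t, p.2)) p.1

/-- `∂_y f` as a function on `ℝ²`. -/
noncomputable def py (f : ℝ × ℝ → ℝ) : ℝ × ℝ → ℝ :=
  fun p => deriv (fun t => f (p.1, t)) p.2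

namespace GNaux


noncomputable def C : NNReal :=
  MeasureTheory.lintegralPowLePowLIntegralFDerivConst (volume : Measure (ℝ × ℝ)) 2

lemma sobolev2 {u : ℝ × ℝ → ℝ} (hu : ContDiff ℝ 1 u) (h2u : HasCompactSupport u) :
    ∫⁻ x, (‖u x‖₊ : ENNReal) ^ 2 ≤
      (C : ENNReal) * (∫⁻ x, (‖fderiv ℝ u x‖₊ : ENNReal)) ^ 2 := by
  have hrank : (Module.finrank ℝ (ℝ × ℝ) : ℝ) = 2 := by
    simp [Module.finrank_prod]
  have hconj : Real.HolderConjugate (Module.finrank ℝ (ℝ × ℝ)) 2 := by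
    rw [hrank]; constructor <;> norm_num
  have h := MeasureTheory.lintegral_pow_le_pow_lintegral_fderiv
    (volume : Measure (ℝ × ℝ)) hu h2u hconj
  rw [show (2 : ℝ) = ((2 : ℕ) : ℝ) by norm_num] at h
  simpa [ENNReal.rpow_natCast, enorm_eq_nnnorm, C] using h

lemma cauchy_schwarz {g h : ℝ × ℝ → ENNReal} (hg : AEMeasurable g) (hh : AEMeasurable h) :
    (∫⁻ x, g x * h x) ^ 2 ≤ (∫⁻ x, g x ^ 2) * (∫⁻ x, h x ^ 2) := by
  have h22 : Real.HolderConjugate 2 2 := ⟨by norm_num, by norm_num, by norm_num⟩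
  have hH := ENNReal.lintegral_mul_le_Lp_mul_Lq volume h22 hg hh
  have e2 : ∀ a : ENNReal, a ^ (2 : ℝ) = a ^ (2 : ℕ) := by
    intro a; rw [show (2 : ℝ) = ((2 : ℕ) : ℝ) by norm_num, ENNReal.rpow_natCast]
  calc (∫⁻ x, g x * h x) ^ 2
      ≤ ((∫⁻ a, g a ^ (2:ℝ)) ^ (1/2:ℝ) * (∫⁻ a, h a ^ (2:ℝ)) ^ (1/2:ℝ)) ^ 2 := by
        gcongr
        exact hH
    _ = (∫⁻ x, g x ^ 2) * (∫⁻ x, h x ^ 2) := by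
        rw [mul_pow, ← ENNReal.rpow_natCast (_ ^ (1/2:ℝ)) 2,
          ← ENNReal.rpow_natCast ((∫⁻ a, h a ^ (2:ℝ)) ^ (1/2:ℝ)) 2,
          ← ENNReal.rpow_mul, ← ENNReal.rpow_mul]
        norm_num [e2]

lemma hasFDerivAt_pow {f : ℝ × ℝ → ℝ} (hf : ContDiff ℝ (⊤ : ℕ∞) f) (n : ℕ) (x : ℝ × ℝ) :
    HasFDerivAt (fun y => f y ^ n) (((n : ℝ) * f x ^ (n - 1)) • fderiv ℝ f x) x := by
  have hfd : HasFDerivAt f (fderiv ℝ f x) x :=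
    (hf.differentiable (by simp) x).hasFDerivAt
  exact (hasDerivAt_pow n (f x)).comp_hasFDerivAt x hfd

lemma step {f : ℝ × ℝ → ℝ} (hf : ContDiff ℝ (⊤ : ℕ∞) f) (h2f : HasCompactSupport f) (n : ℕ)
    (hn : 1 ≤ n) :
    ∫⁻ x, (‖f x‖₊ : ENNReal) ^ (2 * n) ≤
      (C : ENNReal) * (n : ENNReal) ^ 2 * (∫⁻ x, (‖f x‖₊ : ENNReal) ^ (2 * (n - 1))) *
        (∫⁻ x, (‖fderiv ℝ f x‖₊ : ENNReal) ^ 2) := by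
  set u : ℝ × ℝ → ℝ := fun y => f y ^ n with hu_def
  have hu : ContDiff ℝ 1 u := (hf.pow n).of_le (by simp)
  have h2u : HasCompactSupport u :=
    h2f.comp_left (g := fun t : ℝ => t ^ n) (by simp [zero_pow, Nat.one_le_iff_ne_zero.mp hn])
  have hfc : Continuous fun x => fderiv ℝ f x := hf.continuous_fderiv (by simp)
  have hmf : ∀ k : ℕ, AEMeasurable (fun x => (‖f x‖₊ : ENNReal) ^ k) volume := fun k =>
    ((hf.continuous.measurable.nnnorm.coe_nnreal_ennreal).pow_const k).aemeasurable
  have hmd : AEMeasurable (fun x => (‖fderiv ℝ f x‖₊ : ENNReal)) volume :=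
    (hfc.measurable.nnnorm.coe_nnreal_ennreal).aemeasurable
  have hL : ∫⁻ x, (‖u x‖₊ : ENNReal) ^ 2 = ∫⁻ x, (‖f x‖₊ : ENNReal) ^ (2 * n) := by
    refine lintegral_congr fun x => ?_
    rw [hu_def]
    simp only [nnnorm_pow, ENNReal.coe_pow]
    rw [← pow_mul, mul_comm n 2]
  have hD : ∀ x, (‖fderiv ℝ u x‖₊ : ENNReal)
      = (n : ENNReal) * ((‖f x‖₊ : ENNReal) ^ (n - 1) * (‖fderiv ℝ f x‖₊ : ENNReal)) := by
    intro x
    rw [(hasFDerivAt_pow hf n x).fderiv]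
    rw [nnnorm_smul]
    push_cast
    rw [nnnorm_mul, nnnorm_pow]
    push_cast
    rw [Real.nnnorm_natCast]
    push_cast
    ring
  calc ∫⁻ x, (‖f x‖₊ : ENNReal) ^ (2 * n)
      = ∫⁻ x, (‖u x‖₊ : ENNReal) ^ 2 := hL.symm
    _ ≤ (C : ENNReal) * (∫⁻ x, (‖fderiv ℝ u x‖₊ : ENNReal)) ^ 2 := sobolev2 hu h2u
    _ = (C : ENNReal) * ((n : ENNReal) *
          ∫⁻ x, (‖f x‖₊ : ENNReal) ^ (n - 1) * (‖fderiv ℝ f x‖₊ : ENNReal)) ^ 2 := by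
        congr 1
        rw [← lintegral_const_mul' _ _ (by simp : (n : ENNReal) ≠ ⊤)]
        congr 1
        exact lintegral_congr fun x => hD x
    _ = (C : ENNReal) * (n : ENNReal) ^ 2 *
          (∫⁻ x, (‖f x‖₊ : ENNReal) ^ (n - 1) * (‖fderiv ℝ f x‖₊ : ENNReal)) ^ 2 := by
        rw [mul_pow]; ring
    _ ≤ (C : ENNReal) * (n : ENNReal) ^ 2 *
          ((∫⁻ x, ((‖f x‖₊ : ENNReal) ^ (n - 1)) ^ 2) *
            (∫⁻ x, (‖fderiv ℝ f x‖₊ : ENNReal) ^ 2)) := by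
        gcongr
        exact cauchy_schwarz (hmf (n - 1)) hmd
    _ = (C : ENNReal) * (n : ENNReal) ^ 2 * (∫⁻ x, (‖f x‖₊ : ENNReal) ^ (2 * (n - 1))) *
          (∫⁻ x, (‖fderiv ℝ f x‖₊ : ENNReal) ^ 2) := by
        have he : (∫⁻ x, ((‖f x‖₊ : ENNReal) ^ (n - 1)) ^ 2)
            = ∫⁻ x, (‖f x‖₊ : ENNReal) ^ (2 * (n - 1)) :=
          lintegral_congr fun x => by rw [← pow_mul, mul_comm (n - 1) 2]
        rw [he, ← mul_assoc]



lemma px_eq {f : ℝ × ℝ → ℝ} (hf : ContDiff ℝ (⊤ : ℕ∞) f) (p : ℝ × ℝ) :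
    px f p = fderiv ℝ f p ((1 : ℝ), (0 : ℝ)) := by
  have h1 : HasDerivAt (fun t : ℝ => (t, p.2)) ((1 : ℝ), (0 : ℝ)) p.1 :=
    (hasDerivAt_id p.1).prodMk (hasDerivAt_const p.1 p.2)
  have h2 : HasFDerivAt f (fderiv ℝ f p) p := (hf.differentiable (by simp) p).hasFDerivAt
  exact (HasFDerivAt.comp_hasDerivAt p.1 h2 h1).deriv

lemma py_eq {f : ℝ × ℝ → ℝ} (hf : ContDiff ℝ (⊤ : ℕ∞) f) (p : ℝ × ℝ) :
    py f p = fderiv ℝ f p ((0 : ℝ), (1 : ℝ)) := by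
  have h1 : HasDerivAt (fun t : ℝ => (p.1, t)) ((0 : ℝ), (1 : ℝ)) p.2 :=
    (hasDerivAt_const p.2 p.1).prodMk (hasDerivAt_id p.2)
  have h2 : HasFDerivAt f (fderiv ℝ f p) p := (hf.differentiable (by simp) p).hasFDerivAt
  exact (HasFDerivAt.comp_hasDerivAt p.2 h2 h1).deriv

lemma fderiv_norm_le {f : ℝ × ℝ → ℝ} (hf : ContDiff ℝ (⊤ : ℕ∞) f) (p : ℝ × ℝ) :
    ‖fderiv ℝ f p‖ ≤ |px f p| + |py f p| := by
  rw [px_eq hf, py_eq hf]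
  apply ContinuousLinearMap.opNorm_le_bound _ (by positivity)
  rintro ⟨a, b⟩
  have hv : ((a, b) : ℝ × ℝ) = a • ((1 : ℝ), (0 : ℝ)) + b • ((0 : ℝ), (1 : ℝ)) := by
    simp [Prod.ext_iff]
  have hval : fderiv ℝ f p ((a, b) : ℝ × ℝ)
      = a * fderiv ℝ f p (1, 0) + b * fderiv ℝ f p (0, 1) := by
    rw [hv, map_add, (fderiv ℝ f p).map_smul, (fderiv ℝ f p).map_smul]
    simp
  have hn : ‖((a, b) : ℝ × ℝ)‖ = max ‖a‖ ‖b‖ := rfl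
  rw [hval, hn]
  simp only [Real.norm_eq_abs]
  have h1 : |a| ≤ max |a| |b| := le_max_left _ _
  have h2 : |b| ≤ max |a| |b| := le_max_right _ _
  calc ‖a * fderiv ℝ f p (1, 0) + b * fderiv ℝ f p (0, 1)‖
      ≤ |a * fderiv ℝ f p (1, 0)| + |b * fderiv ℝ f p (0, 1)| := abs_add_le _ _
    _ = |a| * |fderiv ℝ f p (1, 0)| + |b| * |fderiv ℝ f p (0, 1)| := by rw [abs_mul, abs_mul]
    _ ≤ max |a| |b| * |fderiv ℝ f p (1, 0)| + max |a| |b| * |fderiv ℝ f p (0, 1)| := by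
        gcongr
    _ = (|fderiv ℝ f p (1, 0)| + |fderiv ℝ f p (0, 1)|) * max |a| |b| := by ring


lemma ennpow_even (x : ℝ) (k : ℕ) :
    (‖x‖₊ : ENNReal) ^ (2 * k) = ENNReal.ofReal (x ^ (2 * k)) := by
  rw [← enorm_eq_nnnorm, ← ofReal_norm, ← ENNReal.ofReal_pow (norm_nonneg x)]
  congr 1
  rw [Real.norm_eq_abs, pow_mul, sq_abs, ← pow_mul]

end GNaux

open GNaux in
/-- Gagliardo–Nirenberg: `∬ f⁶ ≤ c (∬ f²) (∬ |∇f|²)²` on `ℝ²`. -/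
theorem stmt_8 :
    ∃ c : ℝ, 0 < c ∧ ∀ f : ℝ × ℝ → ℝ,
      ContDiff ℝ (⊤ : ℕ∞) f → HasCompactSupport f →
      (∫ p : ℝ × ℝ, (f p) ^ 6) ≤
        c * (∫ p : ℝ × ℝ, (f p) ^ 2) *
          (∫ p : ℝ × ℝ, ((px f p) ^ 2 + (py f p) ^ 2)) ^ 2 := by
  refine ⟨144 * (C : ℝ) ^ 2 + 1, by positivity, ?_⟩
  intro f hf h2f
  have hfc : Continuous fun x => fderiv ℝ f x := hf.continuous_fderiv (by simp)
  set A := ∫⁻ x, (‖f x‖₊ : ENNReal) ^ 6 with hA_def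
  set B := ∫⁻ x, (‖f x‖₊ : ENNReal) ^ 4 with hB_def
  set I := ∫⁻ x, (‖f x‖₊ : ENNReal) ^ 2 with hI_def
  set J := ∫⁻ x, (‖fderiv ℝ f x‖₊ : ENNReal) ^ 2 with hJ_def
  set K := ∫⁻ x, ENNReal.ofReal ((px f x) ^ 2 + (py f x) ^ 2) with hK_def
  -- the two Sobolev steps
  have h3 : A ≤ (C : ENNReal) * 9 * B * J := by
    have := step hf h2f 3 (by norm_num)
    norm_num at this
    convert this using 2
  have h2 : B ≤ (C : ENNReal) * 4 * I * J := by
    have := step hf h2f 2 (by norm_num)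
    norm_num at this
    convert this using 2
  -- bound J by K
  have hJK : J ≤ 2 * K := by
    have hpt : ∀ x, (‖fderiv ℝ f x‖₊ : ENNReal) ^ 2
        ≤ ENNReal.ofReal (2 * ((px f x) ^ 2 + (py f x) ^ 2)) := by
      intro x
      have hb := fderiv_norm_le hf x
      have hsq : ‖fderiv ℝ f x‖ ^ 2 ≤ 2 * ((px f x) ^ 2 + (py f x) ^ 2) := by
        have h1 := abs_nonneg (px f x)
        have h2 := abs_nonneg (py f x)
        have h3 := norm_nonneg (fderiv ℝ f x)
        nlinarith [sq_abs (px f x), sq_abs (py f x), sq_nonneg (|px f x| - |py f x|)]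
      calc (‖fderiv ℝ f x‖₊ : ENNReal) ^ 2
          = ENNReal.ofReal (‖fderiv ℝ f x‖ ^ 2) := by
            rw [← enorm_eq_nnnorm, ← ofReal_norm, ← ENNReal.ofReal_pow (norm_nonneg _)]
        _ ≤ ENNReal.ofReal (2 * ((px f x) ^ 2 + (py f x) ^ 2)) :=
            ENNReal.ofReal_le_ofReal hsq
    calc J ≤ ∫⁻ x, ENNReal.ofReal (2 * ((px f x) ^ 2 + (py f x) ^ 2)) :=
          lintegral_mono hpt
      _ = ∫⁻ x, 2 * ENNReal.ofReal ((px f x) ^ 2 + (py f x) ^ 2) := by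
          refine lintegral_congr fun x => ?_
          rw [ENNReal.ofReal_mul (by norm_num)]
          norm_num
      _ = 2 * K := lintegral_const_mul' _ _ (by simp)
  have hmain : A ≤ 144 * (C : ENNReal) ^ 2 * I * K ^ 2 := by
    calc A ≤ (C : ENNReal) * 9 * B * J := h3
      _ ≤ (C : ENNReal) * 9 * ((C : ENNReal) * 4 * I * J) * J := by gcongr
      _ = 36 * (C : ENNReal) ^ 2 * I * J ^ 2 := by ring
      _ ≤ 36 * (C : ENNReal) ^ 2 * I * (2 * K) ^ 2 := by gcongr
      _ = 144 * (C : ENNReal) ^ 2 * I * K ^ 2 := by ring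
  -- integrability and positivity facts
  have hpx_eq : px f = fun p => fderiv ℝ f p ((1 : ℝ), (0 : ℝ)) := funext (px_eq hf)
  have hpy_eq : py f = fun p => fderiv ℝ f p ((0 : ℝ), (1 : ℝ)) := funext (py_eq hf)
  have hpx_cont : Continuous (px f) := by
    rw [hpx_eq]
    exact (ContinuousLinearMap.apply ℝ ℝ ((1 : ℝ), (0 : ℝ))).continuous.comp hfc
  have hpy_cont : Continuous (py f) := by
    rw [hpy_eq]
    exact (ContinuousLinearMap.apply ℝ ℝ ((0 : ℝ), (1 : ℝ))).continuous.comp hfc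
  have hpx_supp : HasCompactSupport (px f) := by
    rw [hpx_eq]
    exact HasCompactSupport.fderiv_apply (𝕜 := ℝ) h2f ((1 : ℝ), (0 : ℝ))
  have hpy_supp : HasCompactSupport (py f) := by
    rw [hpy_eq]
    exact HasCompactSupport.fderiv_apply (𝕜 := ℝ) h2f ((0 : ℝ), (1 : ℝ))
  have hg_cont : Continuous fun p => (px f p) ^ 2 + (py f p) ^ 2 :=
    (hpx_cont.pow 2).add (hpy_cont.pow 2)
  have hg_supp : HasCompactSupport fun p => (px f p) ^ 2 + (py f p) ^ 2 :=
    (hpx_supp.comp_left (g := fun t : ℝ => t ^ 2) (by simp)).add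
      (hpy_supp.comp_left (g := fun t : ℝ => t ^ 2) (by simp))
  have hint_g : Integrable (fun p => (px f p) ^ 2 + (py f p) ^ 2) volume :=
    hg_cont.integrable_of_hasCompactSupport hg_supp
  have hint2 : Integrable (fun p => f p ^ 2) volume :=
    (show Continuous fun p => f p ^ 2 from hf.continuous.pow 2).integrable_of_hasCompactSupport
      (h2f.comp_left (g := fun t : ℝ => t ^ 2) (by simp))
  -- identify the lintegrals with real integrals
  have eI : I = ∫⁻ x, ENNReal.ofReal (f x ^ 2) :=
    lintegral_congr fun x => by simpa using ennpow_even (f x) 1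
  have eA : A = ∫⁻ x, ENNReal.ofReal (f x ^ 6) :=
    lintegral_congr fun x => by simpa using ennpow_even (f x) 3
  have hI_ne : I ≠ ⊤ := by rw [eI]; exact hint2.lintegral_lt_top.ne
  have hK_ne : K ≠ ⊤ := hint_g.lintegral_lt_top.ne
  have hA_real : (∫ p : ℝ × ℝ, (f p) ^ 6) = A.toReal := by
    rw [eA, ← MeasureTheory.integral_eq_lintegral_of_nonneg_ae
      (Filter.Eventually.of_forall fun x => by positivity)
      (show Continuous fun p => f p ^ 6 from hf.continuous.pow 6).aestronglyMeasurable]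
  have hI_real : (∫ p : ℝ × ℝ, (f p) ^ 2) = I.toReal := by
    rw [eI, ← MeasureTheory.integral_eq_lintegral_of_nonneg_ae
      (Filter.Eventually.of_forall fun x => by positivity)
      (show Continuous fun p => f p ^ 2 from hf.continuous.pow 2).aestronglyMeasurable]
  have hK_real : (∫ p : ℝ × ℝ, ((px f p) ^ 2 + (py f p) ^ 2)) = K.toReal := by
    rw [hK_def, ← MeasureTheory.integral_eq_lintegral_of_nonneg_ae
      (Filter.Eventually.of_forall fun x => by positivity)
      hg_cont.aestronglyMeasurable]
  rw [hA_real, hI_real, hK_real]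
  have hRHS_ne : 144 * (C : ENNReal) ^ 2 * I * K ^ 2 ≠ ⊤ :=
    ENNReal.mul_ne_top
      (ENNReal.mul_ne_top (ENNReal.mul_ne_top (by simp) (by simp)) hI_ne)
      (ENNReal.pow_ne_top hK_ne)
  have hto := ENNReal.toReal_mono hRHS_ne hmain
  calc A.toReal ≤ (144 * (C : ENNReal) ^ 2 * I * K ^ 2).toReal := hto
    _ = 144 * (C : ℝ) ^ 2 * I.toReal * K.toReal ^ 2 := by
        rw [ENNReal.toReal_mul, ENNReal.toReal_mul, ENNReal.toReal_mul,
          ENNReal.toReal_pow, ENNReal.toReal_pow]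
        simp
    _ ≤ (144 * (C : ℝ) ^ 2 + 1) * I.toReal * K.toReal ^ 2 := by
        apply mul_le_mul_of_nonneg_right _ (sq_nonneg _)
        apply mul_le_mul_of_nonneg_right _ ENNReal.toReal_nonneg
        linarith [sq_nonneg (C : ℝ)]
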